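/- Let μ be a measure on ℝ² satisfying μ(B(x,r)) ≤ r^d for all x, r, and N(spt μ ∩ B(x,R), r) ≤ C_{ε/2}(R/r)^{d+ε/2} for all x and 0 < r < R. Let E ⊂ B(0,1), ε > 0 and 0 < r ≤ R ≤ 1. Then the set E_{r,ε}(R) := {x ∈ E : μ(E ∩ B(x,R)) ≤ r^ε R^d} has measure μ(E_{r,ε}(R)) ≤ C · C_{ε/2} · r^{ε/2} for some absolute constant C. -/

import Mathlib

open Metric MeasureTheory
open scoped ENNReal NNReal

noncomputable abbrev E2 := EuclideanSpace ℝ (Fin 2)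

/-- `coveringNumber E r` : minimal number of open `r`-balls needed to cover `E`. -/
noncomputable def coveringNumber {X : Type*} [PseudoMetricSpace X] (E : Set X) (r : ℝ) : ℕ∞ :=
  sInf {n : ℕ∞ | ∃ t : Finset X, (t.card : ℕ∞) = n ∧ E ⊆ ⋃ x ∈ t, Metric.ball x r}

/-- The support of a measure. -/
def sptMeasure (μ : Measure E2) : Set E2 := {x | ∀ r : ℝ, 0 < r → 0 < μ (ball x r)}

noncomputable def gp (a b : ℝ) : E2 := (WithLp.equiv 2 (Fin 2 → ℝ)).symm ![a, b]

lemma grid_cover {ρ : ℝ} (hρ : 0 < ρ) (hρ1 : ρ ≤ 1) :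
    ∃ t : Finset E2, ((t.card : ℝ) ≤ 81 / ρ ^ 2) ∧ ball (0 : E2) 1 ⊆ ⋃ y ∈ t, ball y ρ := by
  classical
  have hρ2 : (0:ℝ) < ρ/2 := by linarith
  set n : ℕ := ⌈2 / ρ⌉₊ + 1 with hn
  set c : ℤ × ℤ → E2 := fun p => gp (p.1 * (ρ/2)) (p.2 * (ρ/2)) with hc
  refine ⟨(Finset.Icc (-(n:ℤ)) n ×ˢ Finset.Icc (-(n:ℤ)) n).image c, ?_, ?_⟩
  · have hcard : ((Finset.Icc (-(n:ℤ)) n ×ˢ Finset.Icc (-(n:ℤ)) n).image c).card ≤ (2*n+1)^2 := by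
      refine (Finset.card_image_le).trans ?_
      rw [Finset.card_product, Int.card_Icc]
      have : ((n:ℤ) + 1 - -(n:ℤ)).toNat = 2*n+1 := by omega
      rw [this]; ring_nf; omega
    have h2 : ((2*n+1 : ℕ) : ℝ) ≤ 9 / ρ := by
      have hceil : (⌈2/ρ⌉₊ : ℝ) < 2/ρ + 1 := Nat.ceil_lt_add_one (by positivity)
      have e : (9:ℝ)/ρ = 2*(2/ρ) + 5/ρ := by ring
      have h3 : (5:ℝ) ≤ 5/ρ := by rw [le_div_iff₀ hρ]; nlinarith
      push_cast [hn]
      linarith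
    have h2' : ((2*n+1:ℕ):ℝ)^2 ≤ (9/ρ)^2 := by
      apply pow_le_pow_left₀ (by positivity) h2
    calc (((Finset.Icc (-(n:ℤ)) n ×ˢ Finset.Icc (-(n:ℤ)) n).image c).card : ℝ)
        ≤ (((2*n+1)^2 : ℕ) : ℝ) := by exact_mod_cast hcard
      _ ≤ (9/ρ)^2 := by push_cast at h2' ⊢; exact h2'
      _ = 81 / ρ^2 := by rw [div_pow]; norm_num
  · intro x hx
    have hcoord : ∀ i : Fin 2, |x i| < 1 := by
      intro i
      have h1 : dist x 0 < 1 := mem_ball.1 hx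
      rw [EuclideanSpace.dist_eq] at h1
      have : |x i| ≤ √(∑ j, dist (x j) ((0:E2) j) ^ 2) := by
        rw [show |x i| = √(dist (x i) ((0:E2) i) ^2) by
          simp [Real.sqrt_sq_eq_abs, Real.dist_eq]]
        apply Real.sqrt_le_sqrt
        exact Finset.single_le_sum (f := fun j => dist (x j) ((0:E2) j) ^ 2)
          (fun j _ => sq_nonneg _) (Finset.mem_univ i)
      linarith
    set i : ℤ := round (x 0 / (ρ/2)) with hi
    set j : ℤ := round (x 1 / (ρ/2)) with hj
    have hround : ∀ y : ℝ, |y - round (y/(ρ/2)) * (ρ/2)| ≤ ρ/4 := by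
      intro y
      have h0 : y/(ρ/2)*(ρ/2) = y := div_mul_cancel₀ y hρ2.ne'
      calc |y - round (y/(ρ/2)) * (ρ/2)|
          = |(y/(ρ/2) - round (y/(ρ/2)))*(ρ/2)| := by rw [sub_mul, h0]
        _ = |y/(ρ/2) - round (y/(ρ/2))| * (ρ/2) := by rw [abs_mul, abs_of_pos hρ2]
        _ ≤ 1/2 * (ρ/2) := mul_le_mul_of_nonneg_right (abs_sub_round _) hρ2.le
        _ = ρ/4 := by ring
    have hmem : ∀ (k : Fin 2), round (x k/(ρ/2)) ∈ Finset.Icc (-(n:ℤ)) n := by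
      intro k
      set t : ℝ := x k / (ρ/2) with ht
      have h1 : |(round t : ℝ)| ≤ |t| + 1/2 := by
        have := abs_sub_round t
        have h2 := abs_sub_abs_le_abs_sub (round t : ℝ) t
        rw [abs_sub_comm] at h2
        linarith
      have h3 : |t| ≤ 2/ρ := by
        rw [ht, abs_div, abs_of_pos hρ2, div_le_iff₀ hρ2]
        have h31 := (hcoord k).le
        have h32 : 2/ρ*(ρ/2) = 1 := by field_simp
        linarith
      have h4 : (2:ℝ)/ρ + 1 ≤ (n:ℝ) := by
        have := Nat.le_ceil (2/ρ)
        push_cast [hn]; linarith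
      have h6 : |round t| ≤ (n:ℤ) := by
        have h5 : |(round t : ℝ)| ≤ (n:ℝ) := by linarith
        exact_mod_cast h5
      exact Finset.mem_Icc.2 (abs_le.mp h6)
    have hball : x ∈ ball (c (i, j)) ρ := by
      rw [mem_ball, EuclideanSpace.dist_eq, Fin.sum_univ_two]
      have e0 : c (i, j) 0 = i * (ρ/2) := by simp [hc, gp]
      have e1 : c (i, j) 1 = j * (ρ/2) := by simp [hc, gp]
      rw [e0, e1]
      have d0 : dist (x 0) ((i:ℝ) * (ρ/2)) ≤ ρ/4 := by
        rw [Real.dist_eq]; exact hround (x 0)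
      have d1 : dist (x 1) ((j:ℝ) * (ρ/2)) ≤ ρ/4 := by
        rw [Real.dist_eq]; exact hround (x 1)
      rw [Real.sqrt_lt' hρ]
      nlinarith [d0, d1, dist_nonneg (x := x 0) (y := ((i:ℝ) * (ρ/2))),
        dist_nonneg (x := x 1) (y := ((j:ℝ) * (ρ/2)))]
    refine Set.mem_iUnion₂.2 ⟨c (i, j), ?_, hball⟩
    refine Finset.mem_image.2 ⟨(i, j), ?_, rfl⟩
    rw [Finset.mem_product]
    exact ⟨hmem 0, hmem 1⟩
lemma measure_compl_sptMeasure (μ : Measure E2) : μ (sptMeasure μ)ᶜ = 0 := by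
  obtain ⟨T, Tcount, hT⟩ := TopologicalSpace.isOpen_iUnion_countable
    (fun i : {p : E2 × ℝ // 0 < p.2 ∧ μ (ball p.1 p.2) = 0} => ball i.1.1 i.1.2)
    (fun i => isOpen_ball)
  have hcover : (sptMeasure μ)ᶜ ⊆ ⋃ i ∈ T, ball i.1.1 i.1.2 := by
    rw [hT]
    intro x hx
    simp only [sptMeasure, Set.mem_compl_iff, Set.mem_setOf_eq, not_forall] at hx
    obtain ⟨r, hr, hr0⟩ := hx
    have : μ (ball x r) = 0 := by
      by_contra h
      exact hr0 (pos_iff_ne_zero.mpr h)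
    exact Set.mem_iUnion.2 ⟨⟨(x, r), hr, this⟩, mem_ball_self hr⟩
  refine measure_mono_null hcover ?_
  exact (measure_biUnion_null_iff Tcount).2 (fun i _ => i.2.2)

lemma exists_cover_of_coveringNumber_le {X : Type*} [PseudoMetricSpace X] (S : Set X) (r : ℝ)
    {b : ℝ≥0∞} (hb : b ≠ ⊤) (h : (coveringNumber S r : ℝ≥0∞) ≤ b) :
    ∃ t : Finset X, ((t.card : ℝ≥0∞) ≤ b) ∧ S ⊆ ⋃ x ∈ t, ball x r := by
  have htop : coveringNumber S r ≠ ⊤ := by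
    intro hh
    rw [hh, ENat.toENNReal_top] at h
    exact hb (top_le_iff.mp h)
  have hlt : coveringNumber S r < coveringNumber S r + 1 :=
    (ENat.lt_add_one_iff htop).2 le_rfl
  unfold _root_.coveringNumber at hlt
  obtain ⟨a, ⟨t, hts, hcov⟩, ha⟩ := sInf_lt_iff.1 hlt
  have hale : a ≤ coveringNumber S r := (ENat.lt_add_one_iff htop).1 ha
  refine ⟨t, ?_, hcov⟩
  have : ((t.card : ℕ∞) : ℝ≥0∞) ≤ (coveringNumber S r : ℝ≥0∞) :=
    ENat.toENNReal_le.2 (hts ▸ hale)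
  rw [ENat.toENNReal_coe] at this
  exact this.trans h

lemma one_le_coveringNumber {X : Type*} [PseudoMetricSpace X] {S : Set X} (hS : S.Nonempty)
    (r : ℝ) : 1 ≤ coveringNumber S r := by
  by_contra hlt
  push_neg at hlt
  unfold _root_.coveringNumber at hlt
  obtain ⟨a, ⟨t, hts, hcov⟩, ha⟩ := sInf_lt_iff.1 hlt
  rw [← hts] at ha
  have hcd : t.card < 1 := by exact_mod_cast ha
  have ht0 : t = ∅ := Finset.card_eq_zero.mp (by omega)
  rw [ht0] at hcov
  simp only [Finset.notMem_empty, Set.iUnion_of_empty, Set.iUnion_empty,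
    Set.subset_empty_iff] at hcov
  obtain ⟨x, hx⟩ := hS
  rw [hcov] at hx
  exact hx

lemma aux_main :
      ∀ (d : ℝ), 0 ≤ d → d ≤ 2 →
      ∀ (μ : Measure E2) (ε Chalf : ℝ), 0 < ε →
      (∀ (x : E2) (r : ℝ), 0 < r → μ (ball x r) ≤ ENNReal.ofReal (r ^ d)) →
      (∀ (x : E2) (r R : ℝ), 0 < r → r < R →
        (coveringNumber (sptMeasure μ ∩ ball x R) r : ℝ≥0∞) ≤
          ENNReal.ofReal (Chalf * (R / r) ^ (d + ε / 2))) →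
      ∀ (E : Set E2), E ⊆ ball (0 : E2) 1 →
      ∀ (r R : ℝ), 0 < r → r ≤ R → R ≤ 1 →
      μ {x ∈ E | μ (E ∩ ball x R) ≤ ENNReal.ofReal (r ^ ε * R ^ d)} ≤
        ENNReal.ofReal (1000 * Chalf * r ^ (ε / 2)) := by
  classical
  intro d hd0 hd2 μ ε Chalf hε hquasi hcov E hE r R hr hrR hR1
  set s : ℝ := d + ε / 2 with hs
  have hs0 : 0 < s := by rw [hs]; linarith
  have hR0 : 0 < R := lt_of_lt_of_le hr hrR
  have hr1 : r ≤ 1 := hrR.trans hR1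
  set A := {x ∈ E | μ (E ∩ ball x R) ≤ ENNReal.ofReal (r ^ ε * R ^ d)} with hA
  show μ A ≤ ENNReal.ofReal (1000 * Chalf * r ^ (ε / 2))
  by_cases hspt : sptMeasure μ = ∅
  · have hA0 : μ A = 0 := by
      refine measure_mono_null ?_ (measure_compl_sptMeasure μ)
      intro x _
      simp [hspt]
    rw [hA0]; exact zero_le
  · obtain ⟨x₀, hx₀⟩ := Set.nonempty_iff_ne_empty.2 hspt
    have hCh : (1:ℝ)/2 ≤ Chalf := by
      set t : ℝ := 2 ^ (-(1/s)) with htdef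
      have ht0 : 0 < t := Real.rpow_pos_of_pos two_pos _
      have ht1 : t < 1 := Real.rpow_lt_one_of_one_lt_of_neg one_lt_two
        (neg_lt_zero.mpr (by positivity))
      have h1 : (1:ℝ≥0∞) ≤ (coveringNumber (sptMeasure μ ∩ ball x₀ 1) t : ℝ≥0∞) := by
        have h0 := one_le_coveringNumber
          (S := sptMeasure μ ∩ ball x₀ 1) ⟨x₀, hx₀, mem_ball_self one_pos⟩ t
        exact_mod_cast ENat.toENNReal_le.2 h0
      have h2 := h1.trans (hcov x₀ t 1 ht0 ht1)
      have h3 : (1:ℝ) ≤ Chalf * (1/t) ^ s := ENNReal.one_le_ofReal.1 h2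
      have h4 : ((1:ℝ)/t) ^ s = 2 := by
        rw [htdef, one_div, Real.rpow_neg (by norm_num : (0:ℝ) ≤ 2), inv_inv,
          ← Real.rpow_mul (by norm_num : (0:ℝ) ≤ 2), one_div_mul_cancel hs0.ne',
          Real.rpow_one]
      rw [h4] at h3
      linarith
    have hCh0 : (0:ℝ) ≤ Chalf := by linarith
    have key : ∀ t : Finset E2, (sptMeasure μ ∩ ball (0:E2) 1 ⊆ ⋃ y ∈ t, ball y (R/2)) →
        μ A ≤ (t.card : ℝ≥0∞) * ENNReal.ofReal (r ^ ε * R ^ d) := by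
      intro t ht
      have hsub : A ⊆ (⋃ y ∈ t, A ∩ ball y (R/2)) ∪ (sptMeasure μ)ᶜ := by
        intro x hxA
        by_cases hxs : x ∈ sptMeasure μ
        · obtain ⟨y, hy, hxy⟩ := Set.mem_iUnion₂.1 (ht ⟨hxs, hE hxA.1⟩)
          exact Or.inl (Set.mem_iUnion₂.2 ⟨y, hy, hxA, hxy⟩)
        · exact Or.inr hxs
      have hball : ∀ y ∈ t, μ (A ∩ ball y (R/2)) ≤ ENNReal.ofReal (r ^ ε * R ^ d) := by
        intro y _
        by_cases hne : (A ∩ ball y (R/2)).Nonempty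
        · obtain ⟨x, hxA, hxy⟩ := hne
          refine (measure_mono ?_).trans hxA.2
          rintro z ⟨hzA, hzy⟩
          refine ⟨hzA.1, mem_ball.2 ?_⟩
          have d1 : dist z y < R/2 := mem_ball.1 hzy
          have d2 : dist x y < R/2 := mem_ball.1 hxy
          calc dist z x ≤ dist z y + dist y x := dist_triangle z y x
            _ = dist z y + dist x y := by rw [dist_comm y x]
            _ < R/2 + R/2 := by linarith
            _ = R := by ring
        · rw [Set.not_nonempty_iff_eq_empty.1 hne, measure_empty]
          exact zero_le
      calc μ A ≤ μ ((⋃ y ∈ t, A ∩ ball y (R/2)) ∪ (sptMeasure μ)ᶜ) := measure_mono hsub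
        _ ≤ μ (⋃ y ∈ t, A ∩ ball y (R/2)) + μ (sptMeasure μ)ᶜ := measure_union_le _ _
        _ = μ (⋃ y ∈ t, A ∩ ball y (R/2)) := by rw [measure_compl_sptMeasure, add_zero]
        _ ≤ ∑ y ∈ t, μ (A ∩ ball y (R/2)) := measure_biUnion_finset_le _ _
        _ ≤ ∑ y ∈ t, ENNReal.ofReal (r ^ ε * R ^ d) := Finset.sum_le_sum hball
        _ = (t.card : ℝ≥0∞) * ENNReal.ofReal (r ^ ε * R ^ d) := by
            rw [Finset.sum_const, nsmul_eq_mul]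
    have hRh : (0:ℝ) < R/2 := by linarith
    have hrRd0 : (0:ℝ) ≤ r ^ ε * R ^ d := by positivity
    by_cases hcase : s ≤ 2
    · -- use covering hypothesis
      have hcb := hcov 0 (R/2) 1 hRh (by linarith)
      obtain ⟨t, hct, hcovt⟩ := exists_cover_of_coveringNumber_le _ _ ENNReal.ofReal_ne_top hcb
      refine (key t hcovt).trans ?_
      have mul1 : (t.card : ℝ≥0∞) * ENNReal.ofReal (r ^ ε * R ^ d) ≤
          ENNReal.ofReal (Chalf * (1/(R/2)) ^ s) * ENNReal.ofReal (r ^ ε * R ^ d) :=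
        mul_le_mul_left hct _
      refine mul1.trans ?_
      rw [← ENNReal.ofReal_mul (by
        exact mul_nonneg hCh0 (Real.rpow_nonneg (by positivity) _))]
      apply ENNReal.ofReal_le_ofReal
      -- real inequality, case s ≤ 2
      have e1 : (1:ℝ)/(R/2) = 2/R := one_div_div R 2
      have hRs : ((2:ℝ)/R) ^ s = 2 ^ s / R ^ s := Real.div_rpow (by norm_num) hR0.le s
      have h2s : (2:ℝ) ^ s ≤ 4 := by
        calc (2:ℝ) ^ s ≤ 2 ^ (2:ℝ) := Real.rpow_le_rpow_of_exponent_le one_le_two hcase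
          _ = 4 := by
            rw [show (2:ℝ) = ((2:ℕ):ℝ) by norm_num, Real.rpow_natCast]; norm_num
      have hRd : R ^ d / R ^ s = R ^ (-(ε/2)) := by
        rw [← Real.rpow_sub hR0]; congr 1; rw [hs]; ring
      have hRr : R ^ (-(ε/2)) ≤ r ^ (-(ε/2)) := by
        rw [Real.rpow_neg hR0.le, Real.rpow_neg hr.le]
        exact inv_anti₀ (Real.rpow_pos_of_pos hr _)
          (Real.rpow_le_rpow hr.le hrR (by positivity))
      have hrr : r ^ ε * r ^ (-(ε/2)) = r ^ (ε/2) := by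
        rw [← Real.rpow_add hr]; congr 1; ring
      have hrε : (0:ℝ) ≤ r ^ ε := Real.rpow_nonneg hr.le _
      calc Chalf * (1/(R/2)) ^ s * (r ^ ε * R ^ d)
          = Chalf * (2 ^ s * (r ^ ε * (R ^ d / R ^ s))) := by
            rw [e1, hRs]; field_simp
        _ = Chalf * (2 ^ s * (r ^ ε * R ^ (-(ε/2)))) := by rw [hRd]
        _ ≤ Chalf * (4 * (r ^ ε * r ^ (-(ε/2)))) := by
            refine mul_le_mul_of_nonneg_left ?_ hCh0
            refine mul_le_mul h2s (mul_le_mul_of_nonneg_left hRr hrε) ?_ (by norm_num)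
            positivity
        _ = 4 * Chalf * r ^ (ε/2) := by rw [hrr]; ring
        _ ≤ 1000 * Chalf * r ^ (ε/2) := by
            have : (0:ℝ) ≤ Chalf * r ^ (ε/2) := mul_nonneg hCh0 (Real.rpow_nonneg hr.le _)
            nlinarith
    · -- geometric covering, s ≥ 2
      push_neg at hcase
      obtain ⟨t, hct, hcovt⟩ := grid_cover (ρ := R/2) hRh (by linarith)
      have hsub2 : sptMeasure μ ∩ ball (0:E2) 1 ⊆ ⋃ y ∈ t, ball y (R/2) :=
        (Set.inter_subset_right).trans hcovt
      refine (key t hsub2).trans ?_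
      rw [← ENNReal.ofReal_natCast t.card, ← ENNReal.ofReal_mul (by positivity)]
      apply ENNReal.ofReal_le_ofReal
      -- real inequality, case s ≥ 2
      have hcard2 : (t.card : ℝ) ≤ 324 / R ^ 2 := by
        refine hct.trans (le_of_eq ?_)
        field_simp
        norm_num
      have hR2 : R ^ (2:ℕ) = R ^ ((2:ℕ):ℝ) := (Real.rpow_natCast R 2).symm
      have hRd2 : R ^ d / R ^ (2:ℕ) = R ^ (d - 2) := by
        rw [hR2, ← Real.rpow_sub hR0]
        norm_num
      have hRr2 : R ^ (d-2) ≤ r ^ (d-2) := by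
        rw [show d - 2 = -(2 - d) by ring, Real.rpow_neg hR0.le, Real.rpow_neg hr.le]
        exact inv_anti₀ (Real.rpow_pos_of_pos hr _)
          (Real.rpow_le_rpow hr.le hrR (by linarith))
      have hsplit : r ^ ε * r ^ (d-2) = r ^ (ε/2) * r ^ (ε/2 + d - 2) := by
        rw [← Real.rpow_add hr, ← Real.rpow_add hr]; congr 1; ring
      have hle1 : r ^ (ε/2 + d - 2) ≤ 1 := Real.rpow_le_one hr.le hr1 (by
        rw [hs] at hcase; linarith)
      have hrε : (0:ℝ) ≤ r ^ ε := Real.rpow_nonneg hr.le _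
      have hrε2 : (0:ℝ) ≤ r ^ (ε/2) := Real.rpow_nonneg hr.le _
      calc (t.card : ℝ) * (r ^ ε * R ^ d)
          ≤ (324 / R ^ 2) * (r ^ ε * R ^ d) := by
            refine mul_le_mul_of_nonneg_right hcard2 hrRd0
        _ = 324 * (r ^ ε * (R ^ d / R ^ (2:ℕ))) := by ring
        _ = 324 * (r ^ ε * R ^ (d-2)) := by rw [hRd2]
        _ ≤ 324 * (r ^ ε * r ^ (d-2)) := by
            refine mul_le_mul_of_nonneg_left (mul_le_mul_of_nonneg_left hRr2 hrε) (by norm_num)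
        _ = 324 * (r ^ (ε/2) * r ^ (ε/2 + d - 2)) := by rw [hsplit]
        _ ≤ 324 * (r ^ (ε/2) * 1) := by
            refine mul_le_mul_of_nonneg_left (mul_le_mul_of_nonneg_left hle1 hrε2) (by norm_num)
        _ = 324 * r ^ (ε/2) := by ring
        _ ≤ 1000 * Chalf * r ^ (ε/2) := by nlinarith


/-- For a quasiregular measure `μ` and `E ⊆ B(0,1)`, the set
`E_{r,ε}(R) = {x ∈ E : μ(E ∩ B(x,R)) ≤ r^ε R^d}` has measure `≤ C · C_{ε/2} · r^{ε/2}`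
for an absolute constant `C`. -/
theorem small_density_set_bound :
    ∃ C : ℝ, 0 < C ∧
      ∀ (d : ℝ), 0 ≤ d → d ≤ 2 →
      ∀ (μ : Measure E2) (ε Chalf : ℝ), 0 < ε →
      (∀ (x : E2) (r : ℝ), 0 < r → μ (ball x r) ≤ ENNReal.ofReal (r ^ d)) →
      (∀ (x : E2) (r R : ℝ), 0 < r → r < R →
        (coveringNumber (sptMeasure μ ∩ ball x R) r : ℝ≥0∞) ≤
          ENNReal.ofReal (Chalf * (R / r) ^ (d + ε / 2))) →
      ∀ (E : Set E2), E ⊆ ball (0 : E2) 1 →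
      ∀ (r R : ℝ), 0 < r → r ≤ R → R ≤ 1 →
      μ {x ∈ E | μ (E ∩ ball x R) ≤ ENNReal.ofReal (r ^ ε * R ^ d)} ≤
        ENNReal.ofReal (C * Chalf * r ^ (ε / 2)) := by
  exact ⟨1000, by norm_num, aux_main⟩
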